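/- Let C be a coloured Petri net without deadlocks (no reachable marking of its unfolding U is dead), and let S be its skeleton. Then the net morphism μ from U to S (μ([p,c]) = p, μ([t,g]) = t), extended to markings, induces a simulation relation between the reachability graphs of U and S viewed as Kripke structures. Consequently every ACTL* formula that holds in S also holds in U. -/

import Mathlib

set_option autoImplicit false

/-- A place/transition net: weight functions for arcs (weight 0 encodes "no arc")
and an initial marking. -/
structure PTNet (P T : Type) where
  pre : P → T → ℕ
  post : T → P → ℕ
  m0 : P → ℕ

/-- Transition `t` is enabled in marking `m`. -/
def PTNet.Enabled {P T : Type} (N : PTNet P T) (m : P → ℕ) (t : T) : Prop :=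
  ∀ p, N.pre p t ≤ m p

/-- Firing `t` leads from marking `m` to marking `m'` (written `m →t m'`). -/
def PTNet.Fires {P T : Type} (N : PTNet P T) (m : P → ℕ) (t : T) (m' : P → ℕ) : Prop :=
  N.Enabled m t ∧ ∀ p, m' p = m p - N.pre p t + N.post t p

/-- Reachability `m →* m'` in a P/T net. -/
def ReachPT {P T : Type} (N : PTNet P T) (m m' : P → ℕ) : Prop :=
  Relation.ReflTransGen (fun x y => ∃ t, N.Fires x t y) m m'

/-- A (uniform) coloured Petri net: arc weights are finite sets of variables, each place
has a finite nonempty colour domain, each transition has a guard, and the initial marking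
puts a multiset over `chi p` on each place `p`. -/
structure ColouredNet (P T Var Colour : Type) where
  Wpre : P → T → Finset Var
  Wpost : T → P → Finset Var
  chi : P → Finset Colour
  chi_nonempty : ∀ p, (chi p).Nonempty
  guard : T → (Var → Colour) → Prop
  m0 : P → Colour → ℕ
  m0_supp : ∀ p c, c ∉ chi p → m0 p c = 0

/-- A firing mode of transition `t`: an assignment of colours to variables that respects
the colour domains of the adjacent places and satisfies the guard of `t`. -/
def IsMode {P T Var Colour : Type} (C : ColouredNet P T Var Colour) (t : T)
    (g : Var → Colour) : Prop :=
  (∀ p, ∀ x ∈ C.Wpre p t, g x ∈ C.chi p) ∧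
  (∀ p, ∀ x ∈ C.Wpost t p, g x ∈ C.chi p) ∧ C.guard t g

/-- Places of the unfolding: pairs `[p,c]` with `c` in the colour domain of `p`. -/
abbrev UPlace {P T Var Colour : Type} (C : ColouredNet P T Var Colour) : Type :=
  {pc : P × Colour // pc.2 ∈ C.chi pc.1}

/-- Transitions of the unfolding: pairs `[t,g]` where `g` is a firing mode of `t`. -/
abbrev UTrans {P T Var Colour : Type} (C : ColouredNet P T Var Colour) : Type :=
  {tg : T × (Var → Colour) // IsMode C tg.1 tg.2}

/-- The unfolding of a coloured net, as a P/T net. -/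
def unfoldNet {P T Var Colour : Type} [DecidableEq Colour]
    (C : ColouredNet P T Var Colour) : PTNet (UPlace C) (UTrans C) where
  pre := fun pc tg =>
    ((C.Wpre pc.val.1 tg.val.1).filter (fun x => tg.val.2 x = pc.val.2)).card
  post := fun tg pc =>
    ((C.Wpost tg.val.1 pc.val.1).filter (fun x => tg.val.2 x = pc.val.2)).card
  m0 := fun pc => C.m0 pc.val.1 pc.val.2

/-- The skeleton of a coloured net, as a P/T net. -/
def skelNet {P T Var Colour : Type} (C : ColouredNet P T Var Colour) : PTNet P T where
  pre := fun p t => (C.Wpre p t).card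
  post := fun t p => (C.Wpost t p).card
  m0 := fun p => ∑ c ∈ C.chi p, C.m0 p c

/-- An atomic proposition `k₁p₁ + … + kₙpₙ ≤ k`, given by integer coefficients and a bound. -/
structure AtomicProp (P : Type) where
  coeff : P → ℤ
  bound : ℤ

/-- Satisfaction of an atomic proposition by a marking of a P/T net. -/
def APsatPT {P : Type} [Fintype P] (a : AtomicProp P) (m : P → ℕ) : Prop :=
  ∑ p : P, a.coeff p * (m p : ℤ) ≤ a.bound

/-- Satisfaction, by a marking of the unfolding, of the unfolding of an atomic proposition
(each place `p` is substituted by the sum of the places `[p,c]` for `c ∈ chi p`). -/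
def APsatU {P T Var Colour : Type} [Fintype P] [Fintype Colour] [DecidableEq Colour]
    (C : ColouredNet P T Var Colour) (a : AtomicProp P) (m : UPlace C → ℕ) : Prop :=
  ∑ u : UPlace C, a.coeff u.val.1 * (m u : ℤ) ≤ a.bound

/-- Extension of the net morphism from the unfolding to the skeleton to markings:
`σ(m)(p) = ∑_{c ∈ chi p} m [p,c]`. -/
def skel {P T Var Colour : Type} (C : ColouredNet P T Var Colour)
    (m : UPlace C → ℕ) : P → ℕ :=
  fun p => ∑ c ∈ (C.chi p).attach, m ⟨(p, c.val), c.property⟩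

/-- A Kripke structure (transition labels are irrelevant for the CTL* semantics and
omitted); `L` is the labelling with atomic propositions. -/
structure Kripke (S AP : Type) where
  init : S
  R : S → S → Prop
  L : S → AP → Prop

/-- Infinite paths of a Kripke structure. -/
def Kripke.IsPath {S AP : Type} (K : Kripke S AP) (π : ℕ → S) : Prop :=
  ∀ i, K.R (π i) (π (i + 1))

/-- The suffix of a path starting at position `i`. -/
def pshift {S : Type} (π : ℕ → S) (i : ℕ) : ℕ → S := fun j => π (i + j)

/-- Syntax of CTL*: atomic propositions, Boolean connectives, temporal operators
X, F, G, U, W, R and path quantifiers A, E. -/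
inductive CTLs (AP : Type) : Type where
  | atom : AP → CTLs AP
  | conj : CTLs AP → CTLs AP → CTLs AP
  | disj : CTLs AP → CTLs AP → CTLs AP
  | neg : CTLs AP → CTLs AP
  | next : CTLs AP → CTLs AP
  | fut : CTLs AP → CTLs AP
  | glob : CTLs AP → CTLs AP
  | untl : CTLs AP → CTLs AP → CTLs AP
  | wuntl : CTLs AP → CTLs AP → CTLs AP
  | release : CTLs AP → CTLs AP → CTLs AP
  | aquant : CTLs AP → CTLs AP
  | equant : CTLs AP → CTLs AP

/-- Satisfaction of a CTL* formula on an (infinite) path of a Kripke structure;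
state formulas are evaluated at the first state of the path. -/
def pathSat {S AP : Type} (K : Kripke S AP) : CTLs AP → (ℕ → S) → Prop
  | .atom a, π => K.L (π 0) a
  | .conj φ ψ, π => pathSat K φ π ∧ pathSat K ψ π
  | .disj φ ψ, π => pathSat K φ π ∨ pathSat K ψ π
  | .neg φ, π => ¬ pathSat K φ π
  | .next φ, π => pathSat K φ (pshift π 1)
  | .fut φ, π => ∃ i, pathSat K φ (pshift π i)
  | .glob φ, π => ∀ i, pathSat K φ (pshift π i)
  | .untl φ ψ, π => ∃ i, pathSat K ψ (pshift π i) ∧ ∀ j, j < i → pathSat K φ (pshift π j)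
  | .wuntl φ ψ, π => (∀ i, pathSat K φ (pshift π i)) ∨
      (∃ i, pathSat K ψ (pshift π i) ∧ ∀ j, j < i → pathSat K φ (pshift π j))
  | .release φ ψ, π => ∀ i, pathSat K ψ (pshift π i) ∨ ∃ j, j < i ∧ pathSat K φ (pshift π j)
  | .aquant φ, π => ∀ π', K.IsPath π' → π' 0 = π 0 → pathSat K φ π'
  | .equant φ, π => ∃ π', K.IsPath π' ∧ π' 0 = π 0 ∧ pathSat K φ π'

/-- A state satisfies a CTL* formula if all paths of the structure starting in it do. -/
def stateSat {S AP : Type} (K : Kripke S AP) (q : S) (φ : CTLs AP) : Prop :=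
  ∀ π, K.IsPath π → π 0 = q → pathSat K φ π

/-- A Kripke structure satisfies a CTL* formula if its initial state does
(for path formulas: if all paths starting in the initial state do). -/
def kripkeSat {S AP : Type} (K : Kripke S AP) (φ : CTLs AP) : Prop :=
  stateSat K K.init φ

/-- The fragment ACTL* of CTL*: formulas containing neither `E` nor `¬`. -/
def IsACTLs {AP : Type} : CTLs AP → Prop
  | .atom _ => True
  | .conj φ ψ => IsACTLs φ ∧ IsACTLs ψ
  | .disj φ ψ => IsACTLs φ ∧ IsACTLs ψ
  | .neg _ => False
  | .next φ => IsACTLs φ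
  | .fut φ => IsACTLs φ
  | .glob φ => IsACTLs φ
  | .untl φ ψ => IsACTLs φ ∧ IsACTLs ψ
  | .wuntl φ ψ => IsACTLs φ ∧ IsACTLs ψ
  | .release φ ψ => IsACTLs φ ∧ IsACTLs ψ
  | .aquant φ => IsACTLs φ
  | .equant _ => False

/-- Abstraction relation between Kripke structures: a surjective function on states such
that an abstract state satisfies an atomic proposition iff all of its concrete preimages do. -/
def IsAbstraction {Q Q' AP : Type} (K : Kripke Q AP) (K' : Kripke Q' AP) (σ : Q → Q') :
    Prop :=
  Function.Surjective σ ∧ ∀ q' a, K'.L q' a ↔ ∀ q, σ q = q' → K.L q a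

/-- Simulation relation: an abstraction relation that transfers reachability (`→*`). -/
def IsSimulation {Q Q' AP : Type} (K : Kripke Q AP) (K' : Kripke Q' AP) (σ : Q → Q') :
    Prop :=
  IsAbstraction K K' σ ∧
  ∀ q q₁ q', Relation.ReflTransGen K.R q q₁ → σ q = q' →
    ∃ q₁', Relation.ReflTransGen K'.R q' q₁' ∧ σ q₁ = q₁'

/-- The Kripke structure of a P/T net: states are markings, transitions are firings, and
a silent τ self-loop is added at every deadlock (dead marking). -/
def KripkeOfNet {P T A : Type} (N : PTNet P T) (L : (P → ℕ) → A → Prop) :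
    Kripke (P → ℕ) A where
  init := N.m0
  R := fun m m' => (∃ t, N.Fires m t m') ∨ ((∀ t, ¬ N.Enabled m t) ∧ m' = m)
  L := L

/-! Summing out the colours sends a firing of `[t,g]` in the unfolding to a firing of `t` in the
skeleton, because each arc weight of `t` is the sum over colours of the corresponding weights
of `[t,g]`; and a marking of the unfolding satisfies an unfolded atomic proposition iff its image
does. So the marking map is a surjective, label-preserving map sending steps to steps, except
possibly the τ-loops at dead markings. Deadlock freedom excludes those on reachable markings, so
every path of the unfolding from the initial marking projects to a path of the skeleton, and
formulas without `E` and `¬` transfer back along the projection by structural induction. -/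

theorem Finset.card_eq_sum_attach_card_filter {ι M : Type} [DecidableEq M] {f : ι → M}
    {s : Finset ι} {t : Finset M} (H : ∀ x ∈ s, f x ∈ t) :
    s.card = ∑ c ∈ t.attach, (s.filter (f · = c)).card :=
  (Finset.card_eq_sum_card_fiberwise H).trans (Finset.sum_attach t _).symm

namespace Kripke

variable {Q Q' AP : Type} {K : Kripke Q AP} {K' : Kripke Q' AP}

lemma IsPath.pshift {π : ℕ → Q} (hπ : K.IsPath π) (i : ℕ) : K.IsPath (pshift π i) :=
  fun j => hπ (i + j)

lemma IsPath.apply_mem {S : Set Q} (hS : ∀ q ∈ S, ∀ q', K.R q q' → q' ∈ S) {π : ℕ → Q}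
    (hπ : K.IsPath π) (h0 : π 0 ∈ S) : ∀ i, π i ∈ S
  | 0 => h0
  | i + 1 => hS _ (hπ.apply_mem hS h0 i) _ (hπ i)

lemma IsPath.comp {S : Set Q} (σ : Q → Q') (hS : ∀ q ∈ S, ∀ q', K.R q q' → q' ∈ S)
    (hR : ∀ q ∈ S, ∀ q', K.R q q' → K'.R (σ q) (σ q')) {π : ℕ → Q} (hπ : K.IsPath π)
    (h0 : π 0 ∈ S) : K'.IsPath (σ ∘ π) :=
  fun i => hR _ (hπ.apply_mem hS h0 i) _ (hπ i)

theorem pathSat_of_pathSat_comp {σ : Q → Q'} {S : Set Q}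
    (hS : ∀ q ∈ S, ∀ q', K.R q q' → q' ∈ S) (hR : ∀ q ∈ S, ∀ q', K.R q q' → K'.R (σ q) (σ q'))
    (hL : ∀ q a, K'.L (σ q) a ↔ K.L q a) {φ : CTLs AP} (hφ : IsACTLs φ) {π : ℕ → Q}
    (hπ : K.IsPath π) (h0 : π 0 ∈ S) (h : pathSat K' φ (σ ∘ π)) : pathSat K φ π := by
  induction φ generalizing π with
  | atom a => exact (hL _ a).1 h
  | conj φ ψ ihφ ihψ => exact ⟨ihφ hφ.1 hπ h0 h.1, ihψ hφ.2 hπ h0 h.2⟩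
  | disj φ ψ ihφ ihψ => exact h.imp (ihφ hφ.1 hπ h0) (ihψ hφ.2 hπ h0)
  | neg => exact hφ.elim
  | equant => exact hφ.elim
  | next φ ih => exact ih hφ (hπ.pshift 1) (hπ.apply_mem hS h0 1) h
  | fut φ ih =>
    obtain ⟨i, hi⟩ := h
    exact ⟨i, ih hφ (hπ.pshift i) (hπ.apply_mem hS h0 i) hi⟩
  | glob φ ih => exact fun i => ih hφ (hπ.pshift i) (hπ.apply_mem hS h0 i) (h i)
  | untl φ ψ ihφ ihψ =>
    obtain ⟨i, hi, hlt⟩ := h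
    exact ⟨i, ihψ hφ.2 (hπ.pshift i) (hπ.apply_mem hS h0 i) hi,
      fun j hj => ihφ hφ.1 (hπ.pshift j) (hπ.apply_mem hS h0 j) (hlt j hj)⟩
  | wuntl φ ψ ihφ ihψ =>
    rcases h with hall | ⟨i, hi, hlt⟩
    · exact .inl fun i => ihφ hφ.1 (hπ.pshift i) (hπ.apply_mem hS h0 i) (hall i)
    · exact .inr ⟨i, ihψ hφ.2 (hπ.pshift i) (hπ.apply_mem hS h0 i) hi,
        fun j hj => ihφ hφ.1 (hπ.pshift j) (hπ.apply_mem hS h0 j) (hlt j hj)⟩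
  | release φ ψ ihφ ihψ =>
    intro i
    exact (h i).imp (ihψ hφ.2 (hπ.pshift i) (hπ.apply_mem hS h0 i))
      fun ⟨j, hj, hφj⟩ => ⟨j, hj, ihφ hφ.1 (hπ.pshift j) (hπ.apply_mem hS h0 j) hφj⟩
  | aquant φ ih =>
    intro ρ hρ hρ0
    have hρS : ρ 0 ∈ S := hρ0 ▸ h0
    exact ih hφ hρ hρS (h _ (hρ.comp σ hS hR hρS) (congrArg σ hρ0))

theorem stateSat_of_stateSat_apply {σ : Q → Q'} {S : Set Q}
    (hS : ∀ q ∈ S, ∀ q', K.R q q' → q' ∈ S) (hR : ∀ q ∈ S, ∀ q', K.R q q' → K'.R (σ q) (σ q'))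
    (hL : ∀ q a, K'.L (σ q) a ↔ K.L q a) {φ : CTLs AP} (hφ : IsACTLs φ) {q : Q} (hq : q ∈ S)
    (h : stateSat K' (σ q) φ) : stateSat K q φ := fun π hπ h0 =>
  have hπS : π 0 ∈ S := h0 ▸ hq
  pathSat_of_pathSat_comp hS hR hL hφ hπ hπS (h _ (hπ.comp σ hS hR hπS) (congrArg σ h0))

lemma isSimulation_of_surjective {σ : Q → Q'} (hσ : Function.Surjective σ)
    (hL : ∀ q a, K'.L (σ q) a ↔ K.L q a)
    (hR : ∀ q q', K.R q q' → Relation.ReflTransGen K'.R (σ q) (σ q')) :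
    IsSimulation K K' σ := by
  refine ⟨⟨hσ, fun q' a => ?_⟩,
    fun q q₁ _ h hq => ⟨σ q₁, hq ▸ Relation.ReflTransGen.lift' σ hR _ _ h, rfl⟩⟩
  obtain ⟨q, rfl⟩ := hσ q'
  exact ⟨fun h q₁ hq₁ => (hL q₁ a).1 (hq₁ ▸ h), fun h => (hL q a).2 (h q rfl)⟩

end Kripke

lemma ReachPT.kripkeOfNet_step {P T A : Type} {N : PTNet P T} {L : (P → ℕ) → A → Prop}
    {m m' : P → ℕ} (hm : ReachPT N N.m0 m) (h : (KripkeOfNet N L).R m m') :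
    ReachPT N N.m0 m' := by
  rcases h with ⟨t, ht⟩ | ⟨-, rfl⟩
  · exact hm.tail ⟨t, ht⟩
  · exact hm

abbrev unfoldKripke {P T Var Colour : Type} [Fintype P] [Fintype Colour] [DecidableEq Colour]
    (C : ColouredNet P T Var Colour) : Kripke (UPlace C → ℕ) (AtomicProp P) :=
  KripkeOfNet (unfoldNet C) fun m a => APsatU C a m

abbrev skelKripke {P T Var Colour : Type} [Fintype P] (C : ColouredNet P T Var Colour) :
    Kripke (P → ℕ) (AtomicProp P) :=
  KripkeOfNet (skelNet C) fun m a => APsatPT a m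

section Skeleton

variable {P T Var Colour : Type} (C : ColouredNet P T Var Colour)

lemma skel_eq_sum {m : UPlace C → ℕ} {f : P → Colour → ℕ} (hm : ∀ u, m u = f u.1.1 u.1.2)
    (p : P) : skel C m p = ∑ c ∈ C.chi p, f p c := by
  simp only [skel, hm]
  exact Finset.sum_attach (C.chi p) (f p)

variable [DecidableEq Colour]

lemma sum_uplace [Fintype P] [Fintype Colour] {M : Type} [AddCommMonoid M]
    (f : UPlace C → M) :
    ∑ u, f u = ∑ p, ∑ c ∈ (C.chi p).attach, f ⟨(p, c), c.2⟩ := by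
  rw [Fintype.sum_equiv (Equiv.subtypeProdEquivSigmaSubtype fun p c => c ∈ C.chi p) f
    (fun s => f ⟨(s.1, s.2), s.2.2⟩) fun _ => rfl, Fintype.sum_sigma]
  simp only [Finset.univ_eq_attach]

lemma skelNet_pre_eq_sum (p : P) (tg : UTrans C) :
    (skelNet C).pre p tg.1.1 = ∑ c ∈ (C.chi p).attach, (unfoldNet C).pre ⟨(p, c), c.2⟩ tg :=
  Finset.card_eq_sum_attach_card_filter (tg.2.1 p)

lemma skelNet_post_eq_sum (p : P) (tg : UTrans C) :
    (skelNet C).post tg.1.1 p = ∑ c ∈ (C.chi p).attach, (unfoldNet C).post tg ⟨(p, c), c.2⟩ :=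
  Finset.card_eq_sum_attach_card_filter (tg.2.2.1 p)

lemma skelNet_fires_of_unfoldNet_fires {m m' : UPlace C → ℕ} {tg : UTrans C}
    (h : (unfoldNet C).Fires m tg m') : (skelNet C).Fires (skel C m) tg.1.1 (skel C m') := by
  obtain ⟨hen, hm'⟩ := h
  refine ⟨fun p => ?_, fun p => ?_⟩
  · rw [skelNet_pre_eq_sum]
    exact Finset.sum_le_sum fun c _ => hen _
  · simp only [skel]
    rw [skelNet_pre_eq_sum, skelNet_post_eq_sum,
      ← Finset.sum_tsub_distrib _ fun c _ => hen _, ← Finset.sum_add_distrib]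
    exact Finset.sum_congr rfl fun c _ => hm' _

lemma skel_m0 : skel C (unfoldNet C).m0 = (skelNet C).m0 :=
  funext (skel_eq_sum C fun _ => rfl)

lemma skel_surjective : Function.Surjective (skel C) := by
  choose c₀ hc₀ using C.chi_nonempty
  intro m
  refine ⟨fun u => if u.1.2 = c₀ u.1.1 then m u.1.1 else 0, funext fun p => ?_⟩
  rw [skel_eq_sum C (f := fun p c => if c = c₀ p then m p else 0) fun _ => rfl,
    Finset.sum_ite_eq', if_pos (hc₀ p)]

lemma apsatU_iff_apsatPT_skel [Fintype P] [Fintype Colour] (a : AtomicProp P)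
    (m : UPlace C → ℕ) : APsatU C a m ↔ APsatPT a (skel C m) := by
  simp only [APsatU, APsatPT, skel, sum_uplace C, Nat.cast_sum, Finset.mul_sum]

lemma skelKripke_reflTransGen_of_unfoldKripke_step [Fintype P] [Fintype Colour]
    {m m' : UPlace C → ℕ} (h : (unfoldKripke C).R m m') :
    Relation.ReflTransGen (skelKripke C).R (skel C m) (skel C m') := by
  rcases h with ⟨_, h⟩ | ⟨-, rfl⟩
  · exact .single (.inl ⟨_, skelNet_fires_of_unfoldNet_fires C h⟩)
  · exact .refl

lemma skelKripke_step_of_unfoldKripke_step [Fintype P] [Fintype Colour]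
    {m m' : UPlace C → ℕ} (hlive : ∃ tg, (unfoldNet C).Enabled m tg)
    (h : (unfoldKripke C).R m m') : (skelKripke C).R (skel C m) (skel C m') := by
  rcases h with ⟨_, h⟩ | ⟨hdead, -⟩
  · exact .inl ⟨_, skelNet_fires_of_unfoldNet_fires C h⟩
  · obtain ⟨tg, htg⟩ := hlive
    exact (hdead tg htg).elim

end Skeleton

theorem deadlockFree_skeleton_simulation_general
    {P T Var Colour : Type} [Fintype P] [Fintype Colour]
    [DecidableEq Colour]
    (C : ColouredNet P T Var Colour)
    (hnodead : ∀ m, ReachPT (unfoldNet C) (unfoldNet C).m0 m →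
        ∃ tg, (unfoldNet C).Enabled m tg) :
    IsSimulation (KripkeOfNet (unfoldNet C) (fun m a => APsatU C a m))
        (KripkeOfNet (skelNet C) (fun m a => APsatPT a m)) (skel C) ∧
      ∀ φ : CTLs (AtomicProp P), IsACTLs φ →
        kripkeSat (KripkeOfNet (skelNet C) (fun m a => APsatPT a m)) φ →
        kripkeSat (KripkeOfNet (unfoldNet C) (fun m a => APsatU C a m)) φ := by
  have hL : ∀ m a, APsatPT a (skel C m) ↔ APsatU C a m :=
    fun m a => (apsatU_iff_apsatPT_skel C a m).symm
  refine ⟨Kripke.isSimulation_of_surjective (skel_surjective C) hL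
    fun _ _ => skelKripke_reflTransGen_of_unfoldKripke_step C, fun φ hφ hsat => ?_⟩
  refine Kripke.stateSat_of_stateSat_apply (S := {m | ReachPT (unfoldNet C) (unfoldNet C).m0 m})
    (fun _ hm _ => hm.kripkeOfNet_step)
    (fun m hm _ => skelKripke_step_of_unfoldKripke_step C (hnodead m hm)) hL hφ .refl ?_
  show stateSat _ (skel C (unfoldNet C).m0) φ
  rw [skel_m0]
  exact hsat

/-- For a coloured net without deadlocks (no reachable marking of its
unfolding is dead), the net morphism from the unfolding to the skeleton, extended to
markings, induces a simulation relation between the reachability graphs viewed as Kripke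
structures; consequently every ACTL* formula that holds in the skeleton holds in the
unfolding. -/
theorem deadlockFree_skeleton_simulation
    {P T Var Colour : Type} [Fintype P] [Fintype T] [Fintype Var] [Fintype Colour]
    [DecidableEq Colour]
    (C : ColouredNet P T Var Colour)
    (hnodead : ∀ m, ReachPT (unfoldNet C) (unfoldNet C).m0 m →
        ∃ tg, (unfoldNet C).Enabled m tg) :
    IsSimulation (KripkeOfNet (unfoldNet C) (fun m a => APsatU C a m))
        (KripkeOfNet (skelNet C) (fun m a => APsatPT a m)) (skel C) ∧
      ∀ φ : CTLs (AtomicProp P), IsACTLs φ →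
        kripkeSat (KripkeOfNet (skelNet C) (fun m a => APsatPT a m)) φ →
        kripkeSat (KripkeOfNet (unfoldNet C) (fun m a => APsatU C a m)) φ :=
  deadlockFree_skeleton_simulation_general C hnodead
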